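/- Let L_φ be the Ruelle transfer operator for an α-Hölder potential φ on a one-sided subshift of finite type over an alphabet of size N. Then L_φ maps the space of α-Hölder functions into itself, and there is a constant C (depending on ‖φ‖_α, N, α) such that |L_φ g|_α ≤ α N e^{‖φ‖_∞} |g|_α + C ‖g‖_∞ for all α-Hölder g. -/
import Mathlib


open Classical

/-- The one-sided subshift of finite type determined by a 0-1 transition matrix `A`. -/
def SFT {N : ℕ} (A : Matrix (Fin N) (Fin N) Bool) : Type :=
  {x : ℕ → Fin N // ∀ n, A (x n) (x (n + 1)) = true}

/-- The metric `d_α(x,y) = α ^ min{n : x_n ≠ y_n}` on the subshift. -/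
noncomputable def dMet {N : ℕ} {A : Matrix (Fin N) (Fin N) Bool}
    (α : ℝ) (x y : SFT A) : ℝ :=
  if x = y then 0 else α ^ sInf {n : ℕ | x.1 n ≠ y.1 n}

/-- Prepending an allowed symbol `a` to an admissible sequence `x`. -/
def cons {N : ℕ} {A : Matrix (Fin N) (Fin N) Bool} (a : Fin N) (x : SFT A)
    (h : A a (x.1 0) = true) : SFT A :=
  ⟨fun n => match n with
    | 0 => a
    | Nat.succ k => x.1 k,
   fun n => by
    cases n with
    | zero => exact h
    | succ k => exact x.2 k⟩

/-- The Ruelle transfer operator. -/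
noncomputable def transfer {N : ℕ} {A : Matrix (Fin N) (Fin N) Bool}
    (φ g : SFT A → ℝ) (x : SFT A) : ℝ :=
  ∑ a : Fin N, if h : A a (x.1 0) = true then
    Real.exp (φ (cons a x h)) * g (cons a x h) else 0

lemma exp_lip (K : ℝ) {u v : ℝ} (hu : u ≤ K) (hv : v ≤ K) :
    |Real.exp u - Real.exp v| ≤ Real.exp K * |u - v| := by
  wlog huv : v ≤ u generalizing u v
  · rw [abs_sub_comm, abs_sub_comm u v]
    exact this hv hu (le_of_not_ge huv)
  rw [abs_of_nonneg (sub_nonneg.2 (Real.exp_le_exp.2 huv)),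
    abs_of_nonneg (sub_nonneg.2 huv)]
  have hev : Real.exp u * (1 + (v - u)) ≤ Real.exp v := by
    have h := Real.add_one_le_exp (v - u)
    calc Real.exp u * (1 + (v - u)) = Real.exp u * ((v - u) + 1) := by ring
      _ ≤ Real.exp u * Real.exp (v - u) :=
        mul_le_mul_of_nonneg_left h (Real.exp_pos u).le
      _ = Real.exp v := by rw [← Real.exp_add]; ring_nf
  nlinarith [Real.exp_le_exp.2 hu, Real.exp_pos u]

lemma dMet_cons {N : ℕ} {A : Matrix (Fin N) (Fin N) Bool} {α : ℝ}
    {a : Fin N} {x y : SFT A} (hxy : x ≠ y) (h : A a (x.1 0) = true)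
    (h' : A a (y.1 0) = true) :
    dMet α (cons a x h) (cons a y h') = α * dMet α x y := by
  have hS : {n : ℕ | x.1 n ≠ y.1 n}.Nonempty := by
    by_contra hc
    rw [Set.not_nonempty_iff_eq_empty, Set.eq_empty_iff_forall_notMem] at hc
    exact hxy (Subtype.ext (funext fun n => not_not.1 (hc n)))
  set m := sInf {n : ℕ | x.1 n ≠ y.1 n} with hmdef
  have hm : x.1 m ≠ y.1 m := Nat.sInf_mem hS
  have hne : cons a x h ≠ cons a y h' := by
    intro e
    exact hm (congrArg (fun z : SFT A => z.1 (m + 1)) e)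
  have hT : sInf {n : ℕ | (cons a x h).1 n ≠ (cons a y h').1 n} = m + 1 := by
    apply le_antisymm
    · exact Nat.sInf_le hm
    · apply le_csInf ⟨m + 1, hm⟩
      intro k hk
      match k with
      | 0 => exact absurd rfl hk
      | Nat.succ j =>
        have hj : j ∈ {n : ℕ | x.1 n ≠ y.1 n} := hk
        have := Nat.sInf_le hj
        omega
  rw [dMet, if_neg hne, hT, dMet, if_neg hxy, ← hmdef, pow_succ]
  ring

/-- Lasota-Yorke inequality: for an `α`-Hölder potential `φ` (with `|φ| ≤ K`
and Hölder constant `Hφ`), there is a constant `C` depending only on the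
potential data such that for every `α`-Hölder `g` with Hölder constant `Hg`
and sup bound `B`, the image `L_φ g` is `α`-Hölder with
`|L_φ g|_α ≤ α N e^K · Hg + C · B`. -/
theorem lasota_yorke {N : ℕ} {A : Matrix (Fin N) (Fin N) Bool}
    {α : ℝ} (hα0 : 0 < α) (hα1 : α < 1)
    (φ : SFT A → ℝ) (K Hφ : ℝ) (hφK : ∀ x, |φ x| ≤ K)
    (hφH : ∀ x y : SFT A, |φ x - φ y| ≤ Hφ * dMet α x y) :
    ∃ C : ℝ, ∀ (g : SFT A → ℝ) (Hg B : ℝ),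
      (∀ x y : SFT A, |g x - g y| ≤ Hg * dMet α x y) → (∀ x, |g x| ≤ B) →
      ∀ x y : SFT A, |transfer φ g x - transfer φ g y| ≤
        (α * N * Real.exp K * Hg + C * B) * dMet α x y := by
  refine ⟨N * Real.exp K * (α * Hφ + 2), ?_⟩
  intro g Hg B hgH hgB x y
  by_cases hxy : x = y
  · subst hxy
    simp [dMet]
  · have hS : {n : ℕ | x.1 n ≠ y.1 n}.Nonempty := by
      by_contra hc
      rw [Set.not_nonempty_iff_eq_empty, Set.eq_empty_iff_forall_notMem] at hc
      exact hxy (Subtype.ext (funext fun n => not_not.1 (hc n)))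
    set m := sInf {n : ℕ | x.1 n ≠ y.1 n} with hmdef
    have hd : dMet α x y = α ^ m := by rw [dMet, if_neg hxy]
    have hdpos : 0 < dMet α x y := hd ▸ pow_pos hα0 m
    have hK0 : 0 ≤ K := le_trans (abs_nonneg _) (hφK x)
    have hB0 : 0 ≤ B := le_trans (abs_nonneg _) (hgB x)
    have hHg0 : 0 ≤ Hg := by
      have h1 := hgH x y
      nlinarith [abs_nonneg (g x - g y)]
    have hHφ0 : 0 ≤ Hφ := by
      have h1 := hφH x y
      nlinarith [abs_nonneg (φ x - φ y)]
    have heK : (0:ℝ) < Real.exp K := Real.exp_pos K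
    have hN0 : (0:ℝ) ≤ N := Nat.cast_nonneg N
    by_cases hm0 : m = 0
    · -- first symbols differ; distance is 1, use the trivial bound
      have hd1 : dMet α x y = 1 := by rw [hd, hm0, pow_zero]
      have bnd : ∀ z : SFT A, |transfer φ g z| ≤ N * (Real.exp K * B) := by
        intro z
        calc |transfer φ g z| ≤
            ∑ a : Fin N, |if h : A a (z.1 0) = true then
              Real.exp (φ (cons a z h)) * g (cons a z h) else 0| :=
              Finset.abs_sum_le_sum_abs _ _
          _ ≤ ∑ _a : Fin N, Real.exp K * B := by
              apply Finset.sum_le_sum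
              intro a _
              by_cases ha : A a (z.1 0) = true
              · rw [dif_pos ha, abs_mul, Real.abs_exp]
                exact mul_le_mul (Real.exp_le_exp.2 ((abs_le.1 (hφK _)).2))
                  (hgB _) (abs_nonneg _) heK.le
              · rw [dif_neg ha, abs_zero]
                positivity
          _ = N * (Real.exp K * B) := by
              rw [Finset.sum_const, Finset.card_univ, Fintype.card_fin,
                nsmul_eq_mul]
      have h1 := bnd x
      have h2 := bnd y
      have h3 : |transfer φ g x - transfer φ g y| ≤
          |transfer φ g x| + |transfer φ g y| := abs_sub _ _
      rw [hd1, mul_one]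
      nlinarith [mul_nonneg (mul_nonneg (mul_nonneg hα0.le hN0) heK.le) hHg0,
        mul_nonneg (mul_nonneg (mul_nonneg (mul_nonneg hα0.le hN0) heK.le) hHφ0) hB0]
    · -- first symbols agree
      have hm1 : 1 ≤ m := Nat.one_le_iff_ne_zero.2 hm0
      have e0 : x.1 0 = y.1 0 := by
        by_contra h0
        have : m ≤ 0 := Nat.sInf_le h0
        omega
      have key : ∀ a : Fin N,
          |(if h : A a (x.1 0) = true then
              Real.exp (φ (cons a x h)) * g (cons a x h) else 0) -
           (if h : A a (y.1 0) = true then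
              Real.exp (φ (cons a y h)) * g (cons a y h) else 0)| ≤
          Real.exp K * (Hg * (α * dMet α x y)) +
            Real.exp K * (Hφ * (α * dMet α x y)) * B := by
        intro a
        by_cases ha : A a (x.1 0) = true
        · have ha' : A a (y.1 0) = true := e0 ▸ ha
          rw [dif_pos ha, dif_pos ha']
          set p := cons a x ha
          set q := cons a y ha'
          have hdc : dMet α p q = α * dMet α x y := dMet_cons hxy ha ha'
          have hsplit : Real.exp (φ p) * g p - Real.exp (φ q) * g q =
              Real.exp (φ p) * (g p - g q) +
                (Real.exp (φ p) - Real.exp (φ q)) * g q := by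
            ring
          rw [hsplit]
          have hgpq : |g p - g q| ≤ Hg * (α * dMet α x y) := by
            have := hgH p q; rwa [hdc] at this
          have hφpq : |Real.exp (φ p) - Real.exp (φ q)| ≤
              Real.exp K * (Hφ * (α * dMet α x y)) := by
            have h1 := exp_lip K ((abs_le.1 (hφK p)).2) ((abs_le.1 (hφK q)).2)
            have h2 : |φ p - φ q| ≤ Hφ * (α * dMet α x y) := by
              have := hφH p q; rwa [hdc] at this
            calc |Real.exp (φ p) - Real.exp (φ q)| ≤
                Real.exp K * |φ p - φ q| := h1
              _ ≤ Real.exp K * (Hφ * (α * dMet α x y)) :=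
                  mul_le_mul_of_nonneg_left h2 heK.le
          have hgq : |g q| ≤ B := hgB q
          have hexp : Real.exp (φ p) ≤ Real.exp K :=
            Real.exp_le_exp.2 ((abs_le.1 (hφK p)).2)
          calc |Real.exp (φ p) * (g p - g q) +
                (Real.exp (φ p) - Real.exp (φ q)) * g q| ≤
              |Real.exp (φ p) * (g p - g q)| +
                |(Real.exp (φ p) - Real.exp (φ q)) * g q| := abs_add_le _ _
            _ = Real.exp (φ p) * |g p - g q| +
                |Real.exp (φ p) - Real.exp (φ q)| * |g q| := by
                rw [abs_mul, abs_mul, Real.abs_exp]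
            _ ≤ Real.exp K * (Hg * (α * dMet α x y)) +
                Real.exp K * (Hφ * (α * dMet α x y)) * B := by
                have t1 : Real.exp (φ p) * |g p - g q| ≤
                    Real.exp K * (Hg * (α * dMet α x y)) :=
                  mul_le_mul hexp hgpq (abs_nonneg _) heK.le
                have t2 : |Real.exp (φ p) - Real.exp (φ q)| * |g q| ≤
                    Real.exp K * (Hφ * (α * dMet α x y)) * B := by
                  apply mul_le_mul hφpq hgq (abs_nonneg _)
                  positivity
                linarith
        · have ha' : ¬ A a (y.1 0) = true := e0 ▸ ha
          rw [dif_neg ha, dif_neg ha']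
          simp only [sub_zero, abs_zero]
          positivity
      have hsum : transfer φ g x - transfer φ g y =
          ∑ a : Fin N, ((if h : A a (x.1 0) = true then
              Real.exp (φ (cons a x h)) * g (cons a x h) else 0) -
           (if h : A a (y.1 0) = true then
              Real.exp (φ (cons a y h)) * g (cons a y h) else 0)) := by
        rw [Finset.sum_sub_distrib]; rfl
      calc |transfer φ g x - transfer φ g y| ≤
          ∑ a : Fin N, |(if h : A a (x.1 0) = true then
              Real.exp (φ (cons a x h)) * g (cons a x h) else 0) -
           (if h : A a (y.1 0) = true then
              Real.exp (φ (cons a y h)) * g (cons a y h) else 0)| := by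
            rw [hsum]; exact Finset.abs_sum_le_sum_abs _ _
        _ ≤ ∑ _a : Fin N, (Real.exp K * (Hg * (α * dMet α x y)) +
              Real.exp K * (Hφ * (α * dMet α x y)) * B) :=
            Finset.sum_le_sum fun a _ => key a
        _ = N * (Real.exp K * (Hg * (α * dMet α x y)) +
              Real.exp K * (Hφ * (α * dMet α x y)) * B) := by
            rw [Finset.sum_const, Finset.card_univ, Fintype.card_fin, nsmul_eq_mul]
        _ ≤ (α * N * Real.exp K * Hg + N * Real.exp K * (α * Hφ + 2) * B) *
              dMet α x y := by
              nlinarith [mul_nonneg (mul_nonneg (mul_nonneg hN0 heK.le) hB0) hdpos.le]
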